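/- arXiv:math/0607686 — 3 statements merged into one kernel-verified Lean document; each statement's English description precedes it below -/
import Mathlib

section
/- There exists a sequence (g_m)_{m≥1} of probability densities on [0,1] with the following two properties: (1) for each fixed i, the M-fold self-convolution g_i ∗ g_i ∗ ··· ∗ g_i (M times, circular convolution) converges in L¹([0,1]) to the constant function 1 as M → ∞; (2) the convolutions h_M = g_1 ∗ g_2 ∗ ··· ∗ g_M do NOT converge in L¹([0,1]) to the constant function 1 as M → ∞. -/
open MeasureTheory Filter

noncomputable section

/-- A probability density on `[0,1]`: nonnegative, integrable, total integral one. -/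
def IsProbDensity (g : ℝ → ℝ) : Prop :=
  (∀ x, 0 ≤ g x) ∧ IntegrableOn g (Set.Icc 0 1) ∧ (∫ x in (0:ℝ)..1, g x) = 1

/-- Circular convolution on `[0,1]` (the argument is taken modulo 1). -/
def circConv (f g : ℝ → ℝ) : ℝ → ℝ :=
  fun x => ∫ y in (0:ℝ)..1, f y * g (Int.fract (x - y))

/-- The `n`-th Fourier coefficient of `g ∈ L¹([0,1])`. -/
def fourierCoeff01 (g : ℝ → ℝ) (n : ℤ) : ℂ :=
  ∫ x in (0:ℝ)..1, (g x : ℂ) * Complex.exp (-(2 * Real.pi * Complex.I) * n * x)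

/-!
Take `g m = δ + (1 - δ) φ_δ` with `δ = 2⁻⁽ᵐ⁺¹⁾` and `φ_δ` the box density of width `δ` at `0`.
Since the uniform density absorbs circular convolution with any density,
`(1 + a (U - 1)) ∗ (1 + t (u - 1)) = 1 + a t (U ∗ u - 1)`; so a convolution of `M` such
mixtures is `1 + T (U - 1)`, with `T` the product of the weights and `U` the convolution of the
`u`'s, and its `L¹` distance to `1` is `T ‖U - 1‖₁`. For a fixed `g i`, `T = (1 - δ)ᴹ → 0`
while `‖U - 1‖₁ ≤ 2`. For `g 1 ∗ ⋯ ∗ g M`, `T ≥ 1 - ∑ δₘ ≥ 1/2`, and `U` vanishes on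
`(∑ δₘ, 1] ⊇ (1/2, 1]`, so `‖U - 1‖₁ ≥ 1/2`.
-/

open Set

theorem intervalIntegral_comp_fract (g : ℝ → ℝ) :
    ∫ x in (0:ℝ)..1, g (Int.fract x) = ∫ x in (0:ℝ)..1, g x := by
  simp only [intervalIntegral.integral_of_le zero_le_one, ← integral_Ico_eq_integral_Ioc]
  exact setIntegral_congr_fun measurableSet_Ico fun x hx => by rw [Int.fract_eq_self.2 hx]

theorem intervalIntegral_comp_fract_sub_left (g : ℝ → ℝ) (x : ℝ) :
    ∫ y in (0:ℝ)..1, g (Int.fract (x - y)) = ∫ y in (0:ℝ)..1, g y := by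
  have hper : Function.Periodic (g ∘ Int.fract) 1 := (Int.fract_periodic ℝ).comp g
  have := intervalIntegral.integral_comp_sub_left (a := 0) (b := 1) (g ∘ Int.fract) x
  simp only [Function.comp_apply] at this
  rw [this, ← intervalIntegral_comp_fract]
  simpa using hper.intervalIntegral_add_eq (x - 1) 0

theorem intervalIntegral_comp_fract_sub_right (g : ℝ → ℝ) (y : ℝ) :
    ∫ x in (0:ℝ)..1, g (Int.fract (x - y)) = ∫ x in (0:ℝ)..1, g x := by
  have hper : Function.Periodic (g ∘ Int.fract) 1 := (Int.fract_periodic ℝ).comp g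
  have := intervalIntegral.integral_comp_sub_right (a := 0) (b := 1) (g ∘ Int.fract) y
  simp only [Function.comp_apply] at this
  rw [this, ← intervalIntegral_comp_fract]
  simpa [neg_add_eq_sub] using hper.intervalIntegral_add_eq (-y) 0

theorem intervalIntegrable_of_abs_le {f : ℝ → ℝ} {C : ℝ} (hf : Measurable f)
    (hC : ∀ x, |f x| ≤ C) (a b : ℝ) : IntervalIntegrable f volume a b :=
  intervalIntegrable_const.mono_fun' hf.aestronglyMeasurable (ae_of_all _ hC)

section circConv

variable {f g : ℝ → ℝ}

theorem measurable_circConv_integrand (hf : Measurable f) (hg : Measurable g) :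
    Measurable fun p : ℝ × ℝ => f p.2 * g (Int.fract (p.1 - p.2)) :=
  (hf.comp measurable_snd).mul
    (hg.comp (measurable_fract.comp (measurable_fst.sub measurable_snd)))

theorem intervalIntegral_circConv {C D : ℝ} (hf : Measurable f) (hg : Measurable g)
    (hC : ∀ x, |f x| ≤ C) (hD : ∀ x, |g x| ≤ D) :
    ∫ x in (0:ℝ)..1, circConv f g x = (∫ x in (0:ℝ)..1, f x) * ∫ x in (0:ℝ)..1, g x := by
  set μ := volume.restrict (Ioc (0:ℝ) 1)
  have hint : Integrable (Function.uncurry fun x y => f y * g (Int.fract (x - y))) (μ.prod μ) := by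
    refine (integrable_const (C * D)).mono'
      (measurable_circConv_integrand hf hg).aestronglyMeasurable (ae_of_all _ fun p => ?_)
    rw [Real.norm_eq_abs, Function.uncurry_apply_pair, abs_mul]
    exact mul_le_mul (hC _) (hD _) (abs_nonneg _) ((abs_nonneg _).trans (hC 0))
  have hinner : ∀ y, ∫ x, f y * g (Int.fract (x - y)) ∂μ = f y * ∫ x in (0:ℝ)..1, g x :=
    fun y => by
      rw [integral_const_mul, ← intervalIntegral.integral_of_le zero_le_one,
        intervalIntegral_comp_fract_sub_right]
  simp only [circConv, intervalIntegral.integral_of_le zero_le_one]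
  rw [integral_integral_swap hint, integral_congr_ae (ae_of_all _ hinner), integral_mul_const,
    intervalIntegral.integral_of_le zero_le_one]

end circConv

structure IsBoundedDensity (f : ℝ → ℝ) : Prop where
  measurable : Measurable f
  nonneg : ∀ x, 0 ≤ f x
  bddAbove : BddAbove (range f)
  integral_eq_one : ∫ x in (0:ℝ)..1, f x = 1

namespace IsBoundedDensity

variable {f g : ℝ → ℝ}

theorem exists_abs_le (hf : IsBoundedDensity f) : ∃ C, ∀ x, |f x| ≤ C := by
  obtain ⟨C, hC⟩ := hf.bddAbove
  exact ⟨C, fun x => (abs_of_nonneg (hf.nonneg x)).trans_le (hC ⟨x, rfl⟩)⟩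

theorem intervalIntegrable (hf : IsBoundedDensity f) (a b : ℝ) :
    IntervalIntegrable f volume a b :=
  let ⟨_, hC⟩ := hf.exists_abs_le
  intervalIntegrable_of_abs_le hf.measurable hC a b

theorem isProbDensity (hf : IsBoundedDensity f) : IsProbDensity f :=
  ⟨hf.nonneg,
    (intervalIntegrable_iff_integrableOn_Icc_of_le zero_le_one).1 (hf.intervalIntegrable 0 1),
    hf.integral_eq_one⟩

theorem circConv (hf : IsBoundedDensity f) (hg : IsBoundedDensity g) :
    IsBoundedDensity (circConv f g) := by
  obtain ⟨C, hC⟩ := hf.exists_abs_le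
  obtain ⟨D, hD⟩ := hg.exists_abs_le
  have hC0 : 0 ≤ C := (abs_nonneg _).trans (hC 0)
  have hmeas := measurable_circConv_integrand hf.measurable hg.measurable
  refine ⟨?_, fun x => ?_, ⟨C * D, ?_⟩, ?_⟩
  · have : _root_.circConv f g = fun x => ∫ y in Ioc (0:ℝ) 1, f y * g (Int.fract (x - y)) :=
      funext fun x => intervalIntegral.integral_of_le zero_le_one
    rw [this]
    exact hmeas.stronglyMeasurable.integral_prod_right'.measurable
  · exact intervalIntegral.integral_nonneg zero_le_one fun y _ =>
      mul_nonneg (hf.nonneg y) (hg.nonneg _)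
  · rintro _ ⟨x, rfl⟩
    have hint : IntervalIntegrable (fun y => f y * g (Int.fract (x - y))) volume 0 1 :=
      intervalIntegrable_of_abs_le (hmeas.comp measurable_prodMk_left)
        (fun y => (abs_mul _ _).trans_le (mul_le_mul (hC _) (hD _) (abs_nonneg _) hC0)) 0 1
    calc _ ≤ ∫ _ in (0:ℝ)..1, C * D :=
          intervalIntegral.integral_mono_on zero_le_one hint intervalIntegrable_const fun y _ =>
            mul_le_mul (le_of_abs_le (hC y)) (le_of_abs_le (hD _)) (hg.nonneg _) hC0
      _ = C * D := by simp
  · rw [intervalIntegral_circConv hf.measurable hg.measurable hC hD, hf.integral_eq_one,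
      hg.integral_eq_one, one_mul]

end IsBoundedDensity

def uniformMix (t : ℝ) (u : ℝ → ℝ) : ℝ → ℝ := fun x => 1 + t * (u x - 1)

def boxDensity (ε : ℝ) : ℝ → ℝ := (Ioc 0 ε).indicator fun _ => ε⁻¹

theorem support_boxDensity_subset (ε : ℝ) : Function.support (boxDensity ε) ⊆ Ioc 0 ε :=
  support_indicator_subset

theorem isBoundedDensity_boxDensity {ε : ℝ} (hε0 : 0 < ε) (hε1 : ε ≤ 1) :
    IsBoundedDensity (boxDensity ε) := by
  refine ⟨measurable_const.indicator measurableSet_Ioc,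
    indicator_nonneg fun _ _ => (inv_pos.2 hε0).le, ⟨ε⁻¹, ?_⟩, ?_⟩
  · rintro _ ⟨x, rfl⟩
    exact indicator_le_self' (fun _ _ => (inv_pos.2 hε0).le) x
  · rw [intervalIntegral.integral_of_le zero_le_one, boxDensity,
      setIntegral_indicator measurableSet_Ioc, Ioc_inter_Ioc, setIntegral_const]
    simp [hε1, max_eq_left hε0.le, hε0.ne']

theorem IsBoundedDensity.uniformMix {u : ℝ → ℝ} (hu : IsBoundedDensity u) {t : ℝ}
    (ht0 : 0 ≤ t) (ht1 : t ≤ 1) : IsBoundedDensity (uniformMix t u) := by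
  obtain ⟨C, hC⟩ := hu.exists_abs_le
  refine ⟨measurable_const.add ((hu.measurable.sub measurable_const).const_mul t),
    fun x => ?_, ⟨1 + t * (C - 1), ?_⟩, ?_⟩
  · show 0 ≤ 1 + t * (u x - 1)
    nlinarith [hu.nonneg x]
  · rintro _ ⟨x, rfl⟩
    show 1 + t * (u x - 1) ≤ 1 + t * (C - 1)
    nlinarith [le_of_abs_le (hC x)]
  · simp only [_root_.uniformMix]
    rw [intervalIntegral.integral_add intervalIntegrable_const
        (((hu.intervalIntegrable 0 1).sub intervalIntegrable_const).const_mul t),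
      intervalIntegral.integral_const_mul,
      intervalIntegral.integral_sub (hu.intervalIntegrable 0 1) intervalIntegrable_const,
      hu.integral_eq_one]
    simp

theorem circConv_uniformMix {U u : ℝ → ℝ} (hU : IsBoundedDensity U) (hu : IsBoundedDensity u)
    (a t : ℝ) : circConv (uniformMix a U) (uniformMix t u) = uniformMix (a * t) (circConv U u) := by
  funext x
  obtain ⟨C, hC⟩ := hU.exists_abs_le
  obtain ⟨D, hD⟩ := hu.exists_abs_le
  set v := fun y => u (Int.fract (x - y))
  have hv_meas : Measurable v :=
    hu.measurable.comp (measurable_fract.comp (measurable_const.sub measurable_id))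
  have hU_int := hU.intervalIntegrable 0 1
  have hv_int : IntervalIntegrable v volume 0 1 :=
    intervalIntegrable_of_abs_le hv_meas (fun y => hD _) 0 1
  have hUv_int : IntervalIntegrable (fun y => U y * v y) volume 0 1 :=
    intervalIntegrable_of_abs_le (hU.measurable.mul hv_meas)
      (fun y => (abs_mul _ _).trans_le
        (mul_le_mul (hC y) (hD _) (abs_nonneg _) ((abs_nonneg _).trans (hC 0)))) 0 1
  have hv_one : ∫ y in (0:ℝ)..1, v y = 1 := by
    rw [intervalIntegral_comp_fract_sub_left, hu.integral_eq_one]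
  show ∫ y in (0:ℝ)..1, (1 + a * (U y - 1)) * (1 + t * (v y - 1))
    = 1 + a * t * (circConv U u x - 1)
  calc ∫ y in (0:ℝ)..1, (1 + a * (U y - 1)) * (1 + t * (v y - 1))
      = ∫ y in (0:ℝ)..1, ((1 - a) * (1 - t) + a * (1 - t) * U y + (1 - a) * t * v y
          + a * t * (U y * v y)) :=
        intervalIntegral.integral_congr fun y _ => by ring
    _ = (1 - a) * (1 - t) + a * (1 - t) * (∫ y in (0:ℝ)..1, U y)
          + (1 - a) * t * (∫ y in (0:ℝ)..1, v y) + a * t * ∫ y in (0:ℝ)..1, U y * v y := by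
        rw [intervalIntegral.integral_add ((intervalIntegrable_const.add
            (hU_int.const_mul _)).add (hv_int.const_mul _)) (hUv_int.const_mul _),
          intervalIntegral.integral_add (intervalIntegrable_const.add
            (hU_int.const_mul _)) (hv_int.const_mul _),
          intervalIntegral.integral_add intervalIntegrable_const (hU_int.const_mul _)]
        simp [intervalIntegral.integral_const_mul]
    _ = 1 + a * t * (circConv U u x - 1) := by
        rw [hU.integral_eq_one, hv_one]
        simp only [circConv, v]
        ring

/-- For `x ∈ (a + b, 1]` and `y ∈ (0, a]` there is no wrap-around and `x - y > b`. -/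
theorem circConv_eqOn_zero {f g : ℝ → ℝ} {a b : ℝ} (hb : 0 ≤ b) (hf : EqOn f 0 (Ioc a 1))
    (hg : Function.support g ⊆ Ioc 0 b) : EqOn (circConv f g) 0 (Ioc (a + b) 1) := by
  intro x hx
  rw [circConv, intervalIntegral.integral_of_le zero_le_one, Pi.zero_apply]
  refine setIntegral_eq_zero_of_forall_eq_zero fun y hy => ?_
  by_cases hya : a < y
  · rw [hf ⟨hya, hy.2⟩, Pi.zero_apply, zero_mul]
  · have hfract : Int.fract (x - y) = x - y :=
      Int.fract_eq_self.2 ⟨by linarith [hx.1], by linarith [hx.2, hy.1]⟩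
    have : g (x - y) = 0 := Function.notMem_support.1 fun h => by linarith [(hg h).2, hx.1]
    rw [hfract, this, mul_zero]

theorem intervalIntegral_abs_uniformMix_sub_one (a : ℝ) (U : ℝ → ℝ) :
    ∫ x in (0:ℝ)..1, |uniformMix a U x - 1| = |a| * ∫ x in (0:ℝ)..1, |U x - 1| := by
  simp only [uniformMix, add_sub_cancel_left, abs_mul, intervalIntegral.integral_const_mul]

theorem intervalIntegral_abs_sub_one_le_two {U : ℝ → ℝ} (hU : IsProbDensity U) :
    ∫ x in (0:ℝ)..1, |U x - 1| ≤ 2 := by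
  obtain ⟨hnonneg, hint, hone⟩ := hU
  have hU_int : IntervalIntegrable U volume 0 1 :=
    (intervalIntegrable_iff_integrableOn_Icc_of_le zero_le_one).2 hint
  calc ∫ x in (0:ℝ)..1, |U x - 1| ≤ ∫ x in (0:ℝ)..1, (U x + 1) :=
        intervalIntegral.integral_mono_on zero_le_one (hU_int.sub intervalIntegrable_const).abs
          (hU_int.add intervalIntegrable_const) fun x _ =>
            abs_le.2 ⟨by linarith [hnonneg x], by linarith [hnonneg x]⟩
    _ = 2 := by
        rw [intervalIntegral.integral_add hU_int intervalIntegrable_const, hone]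
        norm_num

theorem one_sub_le_intervalIntegral_abs_sub_one {U : ℝ → ℝ} {s : ℝ}
    (hU : IntervalIntegrable U volume 0 1) (hs0 : 0 ≤ s) (hs1 : s ≤ 1)
    (hvanish : EqOn U 0 (Ioc s 1)) : 1 - s ≤ ∫ x in (0:ℝ)..1, |U x - 1| := by
  have habs : IntervalIntegrable (fun x => |U x - 1|) volume 0 1 :=
    (hU.sub intervalIntegrable_const).abs
  have htail : ∫ x in s..1, |U x - 1| = 1 - s := by
    rw [intervalIntegral.integral_of_le hs1,
      setIntegral_congr_fun measurableSet_Ioc (g := fun _ => 1) fun x hx => by simp [hvanish hx],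
      setIntegral_const, Real.volume_real_Ioc_of_le hs1, smul_eq_mul, mul_one]
  have hhead : 0 ≤ ∫ x in (0:ℝ)..s, |U x - 1| :=
    intervalIntegral.integral_nonneg hs0 fun x _ => abs_nonneg _
  rw [← intervalIntegral.integral_add_adjacent_intervals
    (habs.mono_set (uIcc_subset_uIcc left_mem_uIcc (mem_uIcc_of_le hs0 hs1)))
    (habs.mono_set (uIcc_subset_uIcc (mem_uIcc_of_le hs0 hs1) right_mem_uIcc)), htail]
  linarith

theorem Finset.one_sub_sum_le_prod_one_sub {ι R : Type*} [CommRing R] [PartialOrder R]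
    [IsOrderedRing R] {s : Finset ι} {f : ι → R} (h0 : ∀ i ∈ s, 0 ≤ f i)
    (h1 : ∀ i ∈ s, f i ≤ 1) : 1 - ∑ i ∈ s, f i ≤ ∏ i ∈ s, (1 - f i) := by
  classical
  induction s using Finset.induction_on with
  | empty => simp
  | insert j s hj ih =>
    rw [Finset.sum_insert hj, Finset.prod_insert hj]
    have hfj0 := h0 j (Finset.mem_insert_self j s)
    have hfj1 := h1 j (Finset.mem_insert_self j s)
    have hprod := ih (fun i hi => h0 i (Finset.mem_insert_of_mem hi))
      (fun i hi => h1 i (Finset.mem_insert_of_mem hi))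
    have hsum : 0 ≤ ∑ i ∈ s, f i := Finset.sum_nonneg fun i hi => h0 i (Finset.mem_insert_of_mem hi)
    calc 1 - (f j + ∑ i ∈ s, f i) ≤ (1 - f j) * (1 - ∑ i ∈ s, f i) := by
          rw [← sub_nonneg]
          convert mul_nonneg hfj0 hsum using 1
          ring
      _ ≤ (1 - f j) * ∏ i ∈ s, (1 - f i) := mul_le_mul_of_nonneg_left hprod (sub_nonneg.2 hfj1)

theorem sum_Icc_one_half_pow_succ (M : ℕ) :
    ∑ m ∈ Finset.Icc 1 M, (1 / 2 : ℝ) ^ (m + 1) = 1 / 2 - (1 / 2) ^ (M + 1) := by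
  induction M with
  | zero => simp
  | succ M ih =>
    rw [Finset.sum_Icc_succ_top (by omega), ih]
    ring

/-- `convChain u M = u 1 ∗ u 2 ∗ ⋯ ∗ u M` for `M ≥ 1`; the value at `0` is a placeholder. -/
def convChain (u : ℕ → ℝ → ℝ) : ℕ → ℝ → ℝ
  | 0 => u 0
  | 1 => u 1
  | M + 2 => circConv (convChain u (M + 1)) (u (M + 2))

section convChain

variable {u : ℕ → ℝ → ℝ}

theorem convChain_succ {M : ℕ} (hM : 1 ≤ M) :
    convChain u (M + 1) = circConv (convChain u M) (u (M + 1)) := by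
  obtain ⟨M, rfl⟩ := Nat.exists_eq_add_of_le' hM
  rfl

theorem isBoundedDensity_convChain (hu : ∀ m, IsBoundedDensity (u m)) :
    ∀ M, IsBoundedDensity (convChain u M)
  | 0 => hu 0
  | 1 => hu 1
  | M + 2 => (isBoundedDensity_convChain hu (M + 1)).circConv (hu (M + 2))

theorem convChain_eqOn_zero {ε : ℕ → ℝ} (hε : ∀ m, 0 ≤ ε m)
    (hu : ∀ m, Function.support (u m) ⊆ Ioc 0 (ε m)) :
    ∀ M, 1 ≤ M → EqOn (convChain u M) 0 (Ioc (∑ m ∈ Finset.Icc 1 M, ε m) 1) := by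
  refine Nat.le_induction ?_ fun M hM ih => ?_
  · intro x hx
    rw [Finset.Icc_self, Finset.sum_singleton] at hx
    exact Function.notMem_support.1 fun h => (hu 1 h).2.not_gt hx.1
  · rw [convChain_succ hM, Finset.sum_Icc_succ_top (by omega)]
    exact circConv_eqOn_zero (hε _) ih (hu _)

theorem eq_uniformMix_convChain (hu : ∀ m, IsBoundedDensity (u m)) {t : ℕ → ℝ}
    {h : ℕ → ℝ → ℝ} (h1 : h 1 = uniformMix (t 1) (u 1))
    (hrec : ∀ M, 1 ≤ M → h (M + 1) = circConv (h M) (uniformMix (t (M + 1)) (u (M + 1)))) :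
    ∀ M, 1 ≤ M → h M = uniformMix (∏ m ∈ Finset.Icc 1 M, t m) (convChain u M) := by
  refine Nat.le_induction ?_ fun M hM ih => ?_
  · rw [Finset.Icc_self, Finset.prod_singleton]
    exact h1
  rw [hrec M hM, ih, circConv_uniformMix (isBoundedDensity_convChain hu M) (hu _),
    Finset.prod_Icc_succ_top (by omega), convChain_succ hM]

end convChain

def counterexampleDensity (m : ℕ) : ℝ → ℝ :=
  uniformMix (1 - (1 / 2) ^ (m + 1)) (boxDensity ((1 / 2) ^ (m + 1)))

theorem isBoundedDensity_counterexampleDensity (m : ℕ) :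
    IsBoundedDensity (counterexampleDensity m) :=
  have hδ : (1 / 2 : ℝ) ^ (m + 1) ≤ 1 := pow_le_one₀ (by norm_num) (by norm_num)
  (isBoundedDensity_boxDensity (by positivity) hδ).uniformMix (sub_nonneg.2 hδ)
    (sub_le_self _ (by positivity))

theorem tendsto_selfConv_counterexampleDensity {i : ℕ} {h : ℕ → ℝ → ℝ}
    (h1 : h 1 = counterexampleDensity i)
    (hrec : ∀ M, 1 ≤ M → h (M + 1) = circConv (h M) (counterexampleDensity i)) :
    Tendsto (fun M => ∫ x in (0:ℝ)..1, |h M x - 1|) atTop (nhds 0) := by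
  set δ : ℝ := (1 / 2) ^ (i + 1)
  have hδ0 : 0 < δ := by positivity
  have hδ1 : δ ≤ 1 := pow_le_one₀ (by norm_num) (by norm_num)
  have hu : ∀ _ : ℕ, IsBoundedDensity (boxDensity δ) :=
    fun _ => isBoundedDensity_boxDensity hδ0 hδ1
  have hrepr := eq_uniformMix_convChain hu (t := fun _ => 1 - δ) h1 hrec
  have hbound : ∀ M, 1 ≤ M → ∫ x in (0:ℝ)..1, |h M x - 1| ≤ 2 * (1 - δ) ^ M := by
    intro M hM
    rw [hrepr M hM, intervalIntegral_abs_uniformMix_sub_one, Finset.prod_const, Nat.card_Icc,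
      Nat.add_sub_cancel, abs_of_nonneg (pow_nonneg (sub_nonneg.2 hδ1) M), mul_comm 2]
    exact mul_le_mul_of_nonneg_left
      (intervalIntegral_abs_sub_one_le_two (isBoundedDensity_convChain hu M).isProbDensity)
      (pow_nonneg (sub_nonneg.2 hδ1) M)
  refine squeeze_zero' (Eventually.of_forall fun M => intervalIntegral.integral_nonneg
    zero_le_one fun _ _ => abs_nonneg _) (eventually_atTop.2 ⟨1, hbound⟩) ?_
  simpa using (tendsto_pow_atTop_nhds_zero_of_lt_one (sub_nonneg.2 hδ1)
    (sub_lt_self 1 hδ0)).const_mul 2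

theorem not_tendsto_conv_counterexampleDensity {h : ℕ → ℝ → ℝ}
    (h1 : h 1 = counterexampleDensity 1)
    (hrec : ∀ M, 1 ≤ M → h (M + 1) = circConv (h M) (counterexampleDensity (M + 1))) :
    ¬ Tendsto (fun M => ∫ x in (0:ℝ)..1, |h M x - 1|) atTop (nhds 0) := by
  set δ : ℕ → ℝ := fun m => (1 / 2) ^ (m + 1)
  have hδ0 : ∀ m, 0 < δ m := fun m => by positivity
  have hδ1 : ∀ m, δ m ≤ 1 := fun m => pow_le_one₀ (by norm_num) (by norm_num)
  have hu : ∀ m, IsBoundedDensity (boxDensity (δ m)) :=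
    fun m => isBoundedDensity_boxDensity (hδ0 m) (hδ1 m)
  have hrepr := eq_uniformMix_convChain hu (t := fun m => 1 - δ m) h1 hrec
  have hsum : ∀ M, ∑ m ∈ Finset.Icc 1 M, δ m ≤ 1 / 2 := fun M => by
    have : (0:ℝ) < (1 / 2) ^ (M + 1) := by positivity
    rw [sum_Icc_one_half_pow_succ]
    linarith
  have hlower : ∀ M, 1 ≤ M → 1 / 4 ≤ ∫ x in (0:ℝ)..1, |h M x - 1| := by
    intro M hM
    have hprod : 1 / 2 ≤ ∏ m ∈ Finset.Icc 1 M, (1 - δ m) := by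
      linarith [hsum M, Finset.one_sub_sum_le_prod_one_sub (s := Finset.Icc 1 M)
        (fun m _ => (hδ0 m).le) (fun m _ => hδ1 m)]
    have htail := one_sub_le_intervalIntegral_abs_sub_one
      ((isBoundedDensity_convChain hu M).intervalIntegrable 0 1)
      (Finset.sum_nonneg fun m _ => (hδ0 m).le) (by linarith [hsum M])
      (convChain_eqOn_zero (fun m => (hδ0 m).le) (fun m => support_boxDensity_subset _) M hM)
    rw [hrepr M hM, intervalIntegral_abs_uniformMix_sub_one, abs_of_pos (by linarith)]
    nlinarith [hsum M]
  intro hT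
  have := ge_of_tendsto hT (eventually_atTop.2 ⟨1, hlower⟩)
  norm_num at this

/-- There is a sequence of probability densities `g m` on `[0,1]` such that (1) for each
fixed `i` the `M`-fold circular self-convolutions of `g i` converge in `L¹([0,1])` to the
constant `1`, but (2) the convolutions `h M = g 1 ∗ g 2 ∗ ⋯ ∗ g M` do NOT converge in
`L¹([0,1])` to the constant `1`. -/
theorem exists_nonIdentical_counterexample :
    ∃ g : ℕ → ℝ → ℝ,
      (∀ m, 1 ≤ m → IsProbDensity (g m)) ∧
      (∀ i, 1 ≤ i → ∀ h : ℕ → ℝ → ℝ, h 1 = g i →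
        (∀ M, 1 ≤ M → h (M + 1) = circConv (h M) (g i)) →
        Tendsto (fun M => ∫ x in (0:ℝ)..1, |h M x - 1|) atTop (nhds 0)) ∧
      (∀ h : ℕ → ℝ → ℝ, h 1 = g 1 →
        (∀ M, 1 ≤ M → h (M + 1) = circConv (h M) (g (M + 1))) →
        ¬ Tendsto (fun M => ∫ x in (0:ℝ)..1, |h M x - 1|) atTop (nhds 0)) :=
  ⟨counterexampleDensity, fun m _ => (isBoundedDensity_counterexampleDensity m).isProbDensity,
    fun _ _ _ => tendsto_selfConv_counterexampleDensity,
    fun _ => not_tendsto_conv_counterexampleDensity⟩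
end
end

section
/- Fix α > 1 and let X be a random variable with density f_α(x) = α/(x (log x)^{α+1}) for x ≥ e and f_α(x) = 0 otherwise. Then for every s ∈ [1, e), the probability that the mantissa base e of X is at most s equals Σ_{m=1}^{∞} ( 1/m^α − 1/(log(s·e^m))^α ), i.e. P(M_e(X) ≤ s) = Σ_{m=1}^{∞} (m^{−α} − (log s + m)^{−α}), and both series converge. -/
/-!
On `[e, ∞)` the event `M_e(x) ≤ s` is the disjoint union of the blocks `[e^m, s e^m]`, `m ≥ 1`,
because `⌊log x⌋ = m` on the `m`-th block, and the density vanishes below `e`. Since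
`-(log x)^(-α)` is an antiderivative of the density, block `m` has mass
`m^(-α) - (log s + m)^(-α)`; countable additivity gives the series, and comparison with the
`p`-series `∑ m^(-α)` its convergence.
-/

open MeasureTheory Real Set

noncomputable def logParetoDensity (α x : ℝ) : ℝ :=
  if exp 1 ≤ x then α / (x * log x ^ (α + 1)) else 0

noncomputable def logParetoMeasure (α : ℝ) : Measure ℝ :=
  volume.withDensity fun x => ENNReal.ofReal (logParetoDensity α x)

theorem hasDerivAt_neg_log_rpow_neg (α : ℝ) {x : ℝ} (hx : 1 < x) :
    HasDerivAt (fun y => -log y ^ (-α)) (α / (x * log x ^ (α + 1))) x := by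
  have hlog : 0 < log x := log_pos hx
  have h := ((hasDerivAt_rpow_const (p := -α) (Or.inl hlog.ne')).comp x
    (hasDerivAt_log (by positivity : x ≠ 0))).neg
  refine h.congr_deriv ?_
  rw [show -α - 1 = -(α + 1) by ring, rpow_neg hlog.le]
  field_simp

theorem continuousOn_div_mul_log_rpow (α : ℝ) :
    ContinuousOn (fun x => α / (x * log x ^ (α + 1))) (Ioi 1) := by
  intro x hx
  have hx : 1 < x := hx
  have hlog : 0 < log x := log_pos hx
  refine (continuousAt_const.div (continuousAt_id.mul
    ((continuousAt_log (by positivity)).rpow_const (Or.inl hlog.ne'))) ?_).continuousWithinAt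
  exact (mul_pos (by positivity) (rpow_pos_of_pos hlog _)).ne'

theorem integral_div_mul_log_rpow (α : ℝ) {a b : ℝ} (ha : 1 < a) (hab : a ≤ b) :
    ∫ x in a..b, α / (x * log x ^ (α + 1)) = log a ^ (-α) - log b ^ (-α) := by
  have hsub : uIcc a b ⊆ Ioi 1 := by
    rw [uIcc_of_le hab]; exact fun x hx => ha.trans_le hx.1
  rw [intervalIntegral.integral_eq_sub_of_hasDerivAt
    (fun x hx => hasDerivAt_neg_log_rpow_neg α (hsub hx))
    (((continuousOn_div_mul_log_rpow α).mono hsub).intervalIntegrable)]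
  ring

theorem logParetoMeasure_Icc {α a b : ℝ} (hα : 0 ≤ α) (ha : exp 1 ≤ a) (hab : a ≤ b) :
    logParetoMeasure α (Icc a b) = ENNReal.ofReal (log a ^ (-α) - log b ^ (-α)) := by
  have ha1 : 1 < a := (one_lt_exp_iff.mpr one_pos).trans_le ha
  have hIcc : Icc a b ⊆ Ioi 1 := fun x hx => ha1.trans_le hx.1
  rw [logParetoMeasure, withDensity_apply _ measurableSet_Icc,
    setLIntegral_congr_fun measurableSet_Icc
      (fun x hx => by rw [logParetoDensity, if_pos (ha.trans hx.1)]),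
    ← ofReal_integral_eq_lintegral_ofReal
      (((continuousOn_div_mul_log_rpow α).mono hIcc).integrableOn_Icc)
      (ae_restrict_of_forall_mem measurableSet_Icc fun x hx => by
        have hx1 : 1 < x := hIcc hx
        have := rpow_pos_of_pos (log_pos hx1) (α + 1)
        positivity),
    integral_Icc_eq_integral_Ioc, ← intervalIntegral.integral_of_le hab,
    integral_div_mul_log_rpow α ha1 hab]

theorem logParetoMeasure_Iio_exp_one (α : ℝ) : logParetoMeasure α (Iio (exp 1)) = 0 := by
  rw [logParetoMeasure, withDensity_apply _ measurableSet_Iio,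
    setLIntegral_congr_fun measurableSet_Iio (g := 0) fun x hx => by
      rw [logParetoDensity, if_neg (not_le.mpr hx), ENNReal.ofReal_zero, Pi.zero_apply]]
  exact lintegral_zero

theorem exp_fract_mul_exp_floor (y : ℝ) : exp (Int.fract y) * exp ⌊y⌋ = exp y := by
  rw [← exp_add, Int.fract_add_floor]

theorem mem_Icc_exp_mul_exp_iff {s x : ℝ} (hs : 0 < s) (hse : s < exp 1) (k : ℤ) :
    x ∈ Icc (exp k) (s * exp k) ↔ 0 < x ∧ ⌊log x⌋ = k ∧ exp (Int.fract (log x)) ≤ s := by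
  constructor
  · rintro ⟨hlo, hhi⟩
    have hx : 0 < x := (exp_pos _).trans_le hlo
    have hlog_lo : (k : ℝ) ≤ log x := (le_log_iff_exp_le hx).mpr hlo
    have hlog_hi : log x ≤ log s + k := by
      rw [← log_exp k, ← log_mul hs.ne' (exp_pos _).ne']
      exact log_le_log hx hhi
    have hls : log s < 1 := (log_lt_iff_lt_exp hs).mpr hse
    have hfloor : ⌊log x⌋ = k := Int.floor_eq_iff.mpr ⟨hlog_lo, by linarith⟩
    refine ⟨hx, hfloor, ?_⟩
    rw [← le_log_iff_exp_le hs, Int.fract, hfloor]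
    linarith
  · rintro ⟨hx, hfloor, hfract⟩
    have hdecomp := exp_fract_mul_exp_floor (log x)
    rw [exp_log hx, hfloor] at hdecomp
    rw [← hdecomp]
    exact ⟨le_mul_of_one_le_left (exp_pos _).le (one_le_exp (Int.fract_nonneg _)),
      mul_le_mul_of_nonneg_right hfract (exp_pos _).le⟩

theorem mem_Icc_exp_nat_add_one_iff {s x : ℝ} (hs : 0 < s) (hse : s < exp 1) (m : ℕ) :
    x ∈ Icc (exp (m + 1)) (s * exp (m + 1)) ↔
      0 < x ∧ ⌊log x⌋ = m + 1 ∧ exp (Int.fract (log x)) ≤ s := by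
  exact_mod_cast mem_Icc_exp_mul_exp_iff hs hse (m + 1)

theorem setOf_exp_fract_log_le_inter_Ici {s : ℝ} (hs : 0 < s) (hse : s < exp 1) :
    {x | exp (Int.fract (log x)) ≤ s} ∩ Ici (exp 1) =
      ⋃ m : ℕ, Icc (exp (m + 1)) (s * exp (m + 1)) := by
  ext x
  simp only [mem_inter_iff, mem_ofPred_eq, mem_Ici, mem_iUnion, mem_Icc_exp_nat_add_one_iff hs hse]
  constructor
  · rintro ⟨hfract, hex⟩
    have hx : 0 < x := (exp_pos 1).trans_le hex
    have hfloor : (1 : ℤ) ≤ ⌊log x⌋ :=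
      Int.le_floor.mpr (by exact_mod_cast (le_log_iff_exp_le hx).mpr hex)
    obtain ⟨m, hm⟩ := Int.eq_ofNat_of_zero_le (sub_nonneg.mpr hfloor)
    exact ⟨m, hx, by omega, hfract⟩
  · rintro ⟨m, hm⟩
    refine ⟨hm.2.2, (exp_le_exp.mpr ?_).trans ((mem_Icc_exp_nat_add_one_iff hs hse m).mpr hm).1⟩
    linarith [Nat.cast_nonneg (α := ℝ) m]

theorem pairwise_disjoint_Icc_exp_nat_add_one {s : ℝ} (hs : 0 < s) (hse : s < exp 1) :
    Pairwise (Function.onFun Disjoint fun m : ℕ => Icc (exp (m + 1)) (s * exp (m + 1))) := by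
  refine fun m n hmn => disjoint_left.mpr fun x hm hn => hmn ?_
  have hm := ((mem_Icc_exp_nat_add_one_iff hs hse m).mp hm).2.1
  have hn := ((mem_Icc_exp_nat_add_one_iff hs hse n).mp hn).2.1
  omega

theorem summable_nat_add_one_rpow_neg {α : ℝ} (hα : 1 < α) :
    Summable fun m : ℕ => ((m : ℝ) + 1) ^ (-α) := by
  exact_mod_cast (summable_nat_add_iff 1).mpr (summable_nat_rpow.mpr (by linarith : -α < -1))

theorem rpow_neg_add_le_rpow_neg {α c x : ℝ} (hα : 0 ≤ α) (hc : 0 ≤ c) (hx : 0 < x) :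
    (c + x) ^ (-α) ≤ x ^ (-α) :=
  rpow_le_rpow_of_nonpos hx (by linarith) (by linarith)

theorem summable_add_nat_add_one_rpow_neg {α c : ℝ} (hα : 1 < α) (hc : 0 ≤ c) :
    Summable fun m : ℕ => (c + ((m : ℝ) + 1)) ^ (-α) :=
  (summable_nat_add_one_rpow_neg hα).of_nonneg_of_le (fun m => by positivity)
    (fun m => rpow_neg_add_le_rpow_neg (by linarith) hc (by positivity))

theorem mantissa_cdf_pareto_log_general {Ω : Type*} [MeasureSpace Ω]
    (α : ℝ) (hα : 1 < α) (X : Ω → ℝ) (hX : Measurable X)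
    (hdens : Measure.map X (volume : Measure Ω) =
      volume.withDensity fun x =>
        ENNReal.ofReal (if Real.exp 1 ≤ x then α / (x * Real.log x ^ (α + 1)) else 0)) :
    ∀ s ∈ Set.Ico (1:ℝ) (Real.exp 1),
      ((volume : Measure Ω) {ω | Real.exp (Int.fract (Real.log (X ω))) ≤ s}).toReal =
          (∑' m : ℕ, (((m : ℝ) + 1) ^ (-α) - (Real.log s + ((m : ℝ) + 1)) ^ (-α))) ∧
        Summable (fun m : ℕ => ((m : ℝ) + 1) ^ (-α)) ∧
        Summable (fun m : ℕ => (Real.log s + ((m : ℝ) + 1)) ^ (-α)) := by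
  rintro s ⟨hs1, hse⟩
  have hs : 0 < s := one_pos.trans_le hs1
  have hsum := summable_nat_add_one_rpow_neg hα
  have hsum' := summable_add_nat_add_one_rpow_neg hα (log_nonneg hs1)
  have hterm_nonneg (m : ℕ) : 0 ≤ ((m : ℝ) + 1) ^ (-α) - (log s + ((m : ℝ) + 1)) ^ (-α) :=
    sub_nonneg.mpr (rpow_neg_add_le_rpow_neg (by linarith) (log_nonneg hs1) (by positivity))
  set S := {x : ℝ | exp (Int.fract (log x)) ≤ s}
  have hS : MeasurableSet S := measurableSet_le (by fun_prop) measurable_const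
  have hlaw : volume (X ⁻¹' S) = logParetoMeasure α S := by
    rw [← Measure.map_apply hX hS, hdens]
    rfl
  have hblocks : logParetoMeasure α S =
      ∑' m : ℕ, ENNReal.ofReal (((m : ℝ) + 1) ^ (-α) - (log s + ((m : ℝ) + 1)) ^ (-α)) := by
    rw [← measure_inter_conull (t := Ici (exp 1))
        (by rw [compl_Ici]; exact logParetoMeasure_Iio_exp_one α),
      setOf_exp_fract_log_le_inter_Ici hs hse,
      measure_iUnion (pairwise_disjoint_Icc_exp_nat_add_one hs hse) fun _ => measurableSet_Icc]
    refine tsum_congr fun m => ?_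
    rw [logParetoMeasure_Icc (by linarith) (exp_le_exp.mpr (by linarith [m.cast_nonneg (α := ℝ)]))
      (le_mul_of_one_le_left (exp_pos _).le hs1), log_exp, log_mul hs.ne' (exp_pos _).ne', log_exp]
  refine ⟨?_, hsum, hsum'⟩
  change (volume (X ⁻¹' S)).toReal = _
  rw [hlaw, hblocks, ← ENNReal.ofReal_tsum_of_nonneg hterm_nonneg (hsum.sub hsum'),
    ENNReal.toReal_ofReal (tsum_nonneg hterm_nonneg)]

/-- For `α > 1` and a random variable `X` with density `f_α(x) = α/(x (log x)^{α+1})`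
for `x ≥ e` (and `0` otherwise), for every `s ∈ [1, e)` the probability that the mantissa
base `e` of `X` (namely `e^{frac(log X)}`) is at most `s` equals
`Σ_{m=1}^{∞} (m^{−α} − (log s + m)^{−α})`, and both series
`Σ m^{−α}` and `Σ (log s + m)^{−α}` converge. -/
theorem mantissa_cdf_pareto_log {Ω : Type*} [MeasureSpace Ω]
    [IsProbabilityMeasure (volume : Measure Ω)]
    (α : ℝ) (hα : 1 < α) (X : Ω → ℝ) (hX : Measurable X)
    (hdens : Measure.map X (volume : Measure Ω) =
      volume.withDensity fun x =>
        ENNReal.ofReal (if Real.exp 1 ≤ x then α / (x * Real.log x ^ (α + 1)) else 0)) :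
    ∀ s ∈ Set.Ico (1:ℝ) (Real.exp 1),
      ((volume : Measure Ω) {ω | Real.exp (Int.fract (Real.log (X ω))) ≤ s}).toReal =
          (∑' m : ℕ, (((m : ℝ) + 1) ^ (-α) - (Real.log s + ((m : ℝ) + 1)) ^ (-α))) ∧
        Summable (fun m : ℕ => ((m : ℝ) + 1) ^ (-α)) ∧
        Summable (fun m : ℕ => (Real.log s + ((m : ℝ) + 1)) ^ (-α)) :=
  mantissa_cdf_pareto_log_general α hα X hX hdens
end

section
/- Fix α > 1. The cumulative distribution function F_{e,α}(s) = Σ_{m=1}^{∞} (m^{−α} − (log s + m)^{−α}) of the mantissa base e of a random variable with density f_α(x) = α/(x (log x)^{α+1}) (x ≥ e) is differentiable on [1, e), and its derivative — the density of the mantissa — is given by the termwise-differentiated series f_{e,α}(s) = α Σ_{m=1}^{∞} 1/(s·(log(s·e^m))^{α+1}) = (α/s) Σ_{m=1}^{∞} (log s + m)^{−(α+1)}, which converges and is uniformly bounded for s ∈ [1, e). -/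
/-!
In terms of the Hurwitz zeta function, `F s = ζ(α, 1) - ζ(α, 1 + log s)`. For `t > c > -1` the
termwise derivatives `-α (t + m + 1)^{-(α+1)}` of `ζ(α, 1 + t)` are dominated by the summable
`α (c + m + 1)^{-(α+1)}`, so `ζ(α, 1 + ·)` has derivative `-α ζ(α + 1, 1 + ·)` on `(-1, ∞)`, and
the chain rule through `log` gives the density. Since `ζ(α + 1, 1 + t)` decreases in `t`, the
density is at most `α ζ(α + 1, 1)` on `[1, e)`.
-/

open Set

noncomputable def shiftedZeta (p t : ℝ) : ℝ := ∑' m : ℕ, (t + (m + 1)) ^ (-p)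

theorem add_natCast_add_one_pos {t : ℝ} (ht : -1 < t) (m : ℕ) : 0 < t + (m + 1) := by
  have := m.cast_nonneg (α := ℝ)
  linarith

theorem summable_rpow_add_succ_neg {p : ℝ} (hp : 1 < p) (t : ℝ) :
    Summable fun m : ℕ => (t + (m + 1)) ^ (-p) := by
  refine .of_norm_bounded ((Real.summable_one_div_nat_add_rpow (t + 1) p).2 hp) fun m => ?_
  calc ‖(t + (m + 1)) ^ (-p)‖ ≤ |t + (m + 1)| ^ (-p) := Real.abs_rpow_le_abs_rpow _ _
    _ = 1 / |(m : ℝ) + (t + 1)| ^ p := by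
      rw [Real.rpow_neg (abs_nonneg _), one_div, add_comm t, add_assoc, add_comm 1 t]

theorem shiftedZeta_nonneg (p : ℝ) {t : ℝ} (ht : -1 < t) : 0 ≤ shiftedZeta p t :=
  tsum_nonneg fun m => (Real.rpow_pos_of_pos (add_natCast_add_one_pos ht m) _).le

theorem shiftedZeta_le_of_le {p s t : ℝ} (hp : 1 < p) (hs : -1 < s) (hst : s ≤ t) :
    shiftedZeta p t ≤ shiftedZeta p s :=
  (summable_rpow_add_succ_neg hp t).tsum_le_tsum
    (fun m => Real.rpow_le_rpow_of_nonpos (add_natCast_add_one_pos hs m) (by linarith)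
      (by linarith))
    (summable_rpow_add_succ_neg hp s)

theorem hasDerivAt_shiftedZeta {p t : ℝ} (hp : 1 < p) (ht : -1 < t) :
    HasDerivAt (shiftedZeta p) (-p * shiftedZeta (p + 1) t) t := by
  have hp0 : 0 ≤ p := by linarith
  obtain ⟨c, hc, hct⟩ := exists_between ht
  have hterm : ∀ (m : ℕ), ∀ y ∈ Ioi c, HasDerivAt (fun z => (z + ((m : ℝ) + 1)) ^ (-p))
      (-p * (y + (m + 1)) ^ (-(p + 1))) y := fun m y hy => by
    have hpos := add_natCast_add_one_pos (hc.trans hy) m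
    refine ((Real.hasDerivAt_rpow_const (p := -p) (.inl hpos.ne')).comp y
      ((hasDerivAt_id y).add_const ((m : ℝ) + 1))).congr_deriv ?_
    rw [mul_one, neg_add', sub_eq_add_neg]
  have hbound : ∀ (m : ℕ), ∀ y ∈ Ioi c,
      ‖-p * (y + (m + 1)) ^ (-(p + 1))‖ ≤ p * (c + (m + 1)) ^ (-(p + 1)) := fun m y hy => by
    have hcm := add_natCast_add_one_pos hc m
    rw [norm_mul, norm_neg, Real.norm_of_nonneg hp0, Real.norm_of_nonneg
      (Real.rpow_pos_of_pos (add_natCast_add_one_pos (hc.trans hy) m) _).le]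
    exact mul_le_mul_of_nonneg_left
      (Real.rpow_le_rpow_of_nonpos hcm (by linarith [mem_Ioi.1 hy]) (by linarith)) hp0
  have := hasDerivAt_tsum_of_isPreconnected
    ((summable_rpow_add_succ_neg (by linarith : 1 < p + 1) c).mul_left p) isOpen_Ioi
    isPreconnected_Ioi hterm hbound hct (summable_rpow_add_succ_neg hp t) hct
  rwa [tsum_mul_left] at this

/-- For `α > 1`, the cumulative distribution function
`F_{e,α}(s) = Σ_{m=1}^{∞} (m^{−α} − (log s + m)^{−α})` of the mantissa base `e` is
differentiable on `[1, e)`, with derivative (the density of the mantissa) given by the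
termwise-differentiated series `f_{e,α}(s) = (α/s) Σ_{m=1}^{∞} (log s + m)^{−(α+1)}`,
which converges and is uniformly bounded for `s ∈ [1, e)`. -/
theorem mantissa_density_pareto_log (α : ℝ) (hα : 1 < α) (F : ℝ → ℝ)
    (hF : ∀ s, F s = ∑' m : ℕ, (((m : ℝ) + 1) ^ (-α) - (Real.log s + ((m : ℝ) + 1)) ^ (-α))) :
    (∀ s ∈ Set.Ico (1:ℝ) (Real.exp 1),
      Summable (fun m : ℕ => (Real.log s + ((m : ℝ) + 1)) ^ (-(α + 1))) ∧
      HasDerivWithinAt F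
        ((α / s) * ∑' m : ℕ, (Real.log s + ((m : ℝ) + 1)) ^ (-(α + 1)))
        (Set.Ico (1:ℝ) (Real.exp 1)) s) ∧
    ∃ C : ℝ, ∀ s ∈ Set.Ico (1:ℝ) (Real.exp 1),
      (α / s) * (∑' m : ℕ, (Real.log s + ((m : ℝ) + 1)) ^ (-(α + 1))) ≤ C := by
  have hF' : F = fun s => shiftedZeta α 0 - shiftedZeta α (Real.log s) := funext fun s => by
    rw [hF, shiftedZeta, shiftedZeta, ← (summable_rpow_add_succ_neg hα 0).tsum_sub
      (summable_rpow_add_succ_neg hα _)]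
    simp only [zero_add]
  have hα1 : 1 < α + 1 := by linarith
  refine ⟨fun s ⟨hs1, _⟩ => ⟨summable_rpow_add_succ_neg hα1 _, ?_⟩,
    ⟨α * shiftedZeta (α + 1) 0, fun s ⟨hs1, _⟩ => ?_⟩⟩
  · have hlog : -1 < Real.log s := by linarith [Real.log_nonneg hs1]
    rw [hF']
    refine (((hasDerivAt_shiftedZeta hα hlog).comp s
      (Real.hasDerivAt_log (by positivity))).const_sub _).hasDerivWithinAt.congr_deriv ?_
    rw [shiftedZeta]
    field_simp
  · have hlog := Real.log_nonneg hs1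
    change α / s * shiftedZeta (α + 1) (Real.log s) ≤ _
    calc α / s * shiftedZeta (α + 1) (Real.log s) ≤ α * shiftedZeta (α + 1) (Real.log s) := by
          gcongr
          · exact shiftedZeta_nonneg _ (by linarith)
          · exact div_le_self (by linarith) hs1
      _ ≤ α * shiftedZeta (α + 1) 0 := by
          gcongr
          exact shiftedZeta_le_of_le hα1 (by norm_num) hlog
end
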